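/- Let A be an n×n real matrix with no zero rows, let A_i^T denote its i-th row, and define the reflections R_i = I_n - 2 A_i A_i^T / ‖A_i‖² and R_A = R_n ⋯ R_2 R_1. Then det(R_A - I_n) = (-2)^n det(A)² ∏_{i=1}^n ‖A_i‖^{-2}. -/
import Mathlib


open Matrix

/-- The Householder reflection determined by a (nonzero) vector `a`:
`I - 2 a aᵀ / ‖a‖²`. -/
noncomputable def reflOf {n : ℕ} (a : Fin n → ℝ) : Matrix (Fin n) (Fin n) ℝ :=
  1 - (2 / (∑ j, a j ^ 2)) • Matrix.vecMulVec a a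

/-- The product `R_m ⋯ R_2 R_1` of the Householder reflections of the rows of `A`. -/
noncomputable def reflProd {m n : ℕ} (A : Matrix (Fin m) (Fin n) ℝ) :
    Matrix (Fin n) (Fin n) ℝ :=
  (((List.finRange m).map (fun i => reflOf (A i))).reverse).prod

/-- The `W`-vectors: `w i = -(2/‖A i‖²) • A i`. -/
noncomputable def ww {m n : ℕ} (A : Matrix (Fin m) (Fin n) ℝ) (i : Fin m) : Fin n → ℝ :=
  (-(2 / (∑ j, A i j ^ 2))) • A i

/-- The `V`-vectors: `v i = (R_{i-1} ⋯ R_1)ᵀ *ᵥ A i`. -/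
noncomputable def vv : ∀ {m n : ℕ}, Matrix (Fin m) (Fin n) ℝ → Fin m → (Fin n → ℝ)
  | 0, _, _ => Fin.elim0
  | m + 1, _, A =>
    Fin.lastCases ((reflProd (A.submatrix Fin.castSucc id))ᵀ *ᵥ A (Fin.last m))
      (vv (A.submatrix Fin.castSucc id))

lemma vv_castSucc {m n : ℕ} (A : Matrix (Fin (m + 1)) (Fin n) ℝ) (i : Fin m) :
    vv A i.castSucc = vv (A.submatrix Fin.castSucc id) i := by
  simp [vv]

lemma vv_last {m n : ℕ} (A : Matrix (Fin (m + 1)) (Fin n) ℝ) :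
    vv A (Fin.last m) = (reflProd (A.submatrix Fin.castSucc id))ᵀ *ᵥ A (Fin.last m) := by
  simp [vv]

lemma ww_castSucc {m n : ℕ} (A : Matrix (Fin (m + 1)) (Fin n) ℝ) (i : Fin m) :
    ww A i.castSucc = ww (A.submatrix Fin.castSucc id) i := rfl

lemma reflProd_succ {m n : ℕ} (A : Matrix (Fin (m + 1)) (Fin n) ℝ) :
    reflProd A = reflOf (A (Fin.last m)) * reflProd (A.submatrix Fin.castSucc id) := by
  unfold reflProd
  rw [← List.ofFn_eq_map, ← List.ofFn_eq_map, List.ofFn_succ']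
  simp only [List.concat_eq_append, List.reverse_append, List.reverse_cons, List.reverse_nil,
    List.nil_append, List.singleton_append, List.prod_cons]
  rfl

lemma vecMulVec_mul {n : ℕ} (a b : Fin n → ℝ) (P : Matrix (Fin n) (Fin n) ℝ) :
    vecMulVec a b * P = vecMulVec a (Pᵀ *ᵥ b) := by
  ext i j
  simp only [Matrix.mul_apply, vecMulVec_apply, Matrix.mulVec, Matrix.transpose_apply,
    dotProduct, Finset.mul_sum, Matrix.of_apply]
  exact Finset.sum_congr rfl fun k _ => by ring

lemma smul_vecMulVec {n : ℕ} (c : ℝ) (a b : Fin n → ℝ) :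
    c • vecMulVec a b = vecMulVec (c • a) b := by
  ext i j
  simp [vecMulVec_apply, mul_assoc]

lemma neg_smul_vecMulVec {n : ℕ} (c : ℝ) (a b : Fin n → ℝ) :
    -(c • vecMulVec a b) = vecMulVec ((-c) • a) b := by
  rw [← smul_vecMulVec, neg_smul]

lemma sum_mulVec' {ι : Type*} {n k : ℕ} (s : Finset ι) (M : ι → Matrix (Fin n) (Fin k) ℝ)
    (x : Fin k → ℝ) : (∑ i ∈ s, M i) *ᵥ x = ∑ i ∈ s, M i *ᵥ x := by
  ext r
  simp only [Matrix.mulVec, dotProduct, Matrix.sum_apply, Finset.sum_apply, Finset.sum_mul]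
  exact Finset.sum_comm

lemma transpose_vecMulVec {n : ℕ} (a b : Fin n → ℝ) :
    (vecMulVec a b)ᵀ = vecMulVec b a := by
  ext i j
  simp [vecMulVec_apply, mul_comm]

lemma vecMulVec_mulVec {n : ℕ} (a b x : Fin n → ℝ) :
    vecMulVec a b *ᵥ x = (b ⬝ᵥ x) • a := by
  ext i
  simp only [Matrix.mulVec, vecMulVec_apply, dotProduct, Pi.smul_apply, smul_eq_mul,
    Finset.sum_mul]
  exact Finset.sum_congr rfl fun k _ => by ring

/-- Key identity: `R_m ⋯ R_1 = I + ∑ᵢ wᵢ vᵢᵀ`. -/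
lemma reflProd_eq {m n : ℕ} (A : Matrix (Fin m) (Fin n) ℝ) :
    reflProd A = 1 + ∑ i, vecMulVec (ww A i) (vv A i) := by
  induction m with
  | zero => simp [reflProd, List.finRange]
  | succ m ih =>
    have key : reflProd A
        = reflProd (A.submatrix Fin.castSucc id)
          + vecMulVec (ww A (Fin.last m)) (vv A (Fin.last m)) := by
      rw [reflProd_succ, reflOf, sub_mul, one_mul, smul_mul_assoc, vecMulVec_mul, vv_last,
        sub_eq_add_neg, neg_smul_vecMulVec]
      rfl
    rw [key, ih (A.submatrix Fin.castSucc id),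
      Fin.sum_univ_castSucc (f := fun i : Fin (m + 1) => vecMulVec (ww A i) (vv A i))]
    simp only [vv_castSucc, ww_castSucc]
    rw [add_assoc]

/-- `v i = A i + ∑_{j<i} (w j ⬝ A i) • v j`. -/
lemma vv_eq {m n : ℕ} (A : Matrix (Fin m) (Fin n) ℝ) (i : Fin m) :
    vv A i = A i + ∑ j, (if j < i then ww A j ⬝ᵥ A i else 0) • vv A j := by
  induction m with
  | zero => exact i.elim0
  | succ m ih =>
    induction i using Fin.lastCases with
    | last =>
      rw [vv_last, reflProd_eq, Matrix.transpose_add, Matrix.transpose_one,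
        Matrix.transpose_sum, Matrix.add_mulVec, Matrix.one_mulVec, sum_mulVec']
      rw [Fin.sum_univ_castSucc (f := fun j : Fin (m + 1) =>
        (if j < Fin.last m then ww A j ⬝ᵥ A (Fin.last m) else 0) • vv A j)]
      rw [if_neg (lt_irrefl _), zero_smul, add_zero]
      congr 1
      refine Finset.sum_congr rfl fun j _ => ?_
      rw [transpose_vecMulVec, vecMulVec_mulVec, vv_castSucc, ww_castSucc,
        if_pos (Fin.castSucc_lt_last j)]
    | cast i =>
      rw [vv_castSucc, ih (A.submatrix Fin.castSucc id) i]
      rw [Fin.sum_univ_castSucc (f := fun j : Fin (m + 1) =>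
        (if j < Fin.castSucc i then ww A j ⬝ᵥ A (Fin.castSucc i) else 0) • vv A j)]
      rw [if_neg (Fin.castSucc_lt_last i).asymm, zero_smul, add_zero]
      congr 1
      refine Finset.sum_congr rfl fun j _ => ?_
      simp only [vv_castSucc, ww_castSucc, Fin.castSucc_lt_castSucc_iff]
      rfl

/-- `det(R_A - I) = (-2)^n det(A)² ∏ᵢ ‖Aᵢ‖⁻²`. -/
theorem det_reflProd_sub_one (n : ℕ) (A : Matrix (Fin n) (Fin n) ℝ)
    (hA : ∀ i, A i ≠ 0) :
    (reflProd A - 1).det = (-2 : ℝ) ^ n * A.det ^ 2 * ∏ i, (∑ j, A i j ^ 2)⁻¹ := by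
  classical
  set Wt : Matrix (Fin n) (Fin n) ℝ := Matrix.of (ww A) with hWt
  set Vt : Matrix (Fin n) (Fin n) ℝ := Matrix.of (vv A) with hVt
  have hfact : reflProd A - 1 = Wtᵀ * Vt := by
    rw [reflProd_eq, add_sub_cancel_left]
    ext r s
    simp [Matrix.mul_apply, vecMulVec_apply, hWt, hVt, Matrix.sum_apply]
  -- det Wt
  have hW : Wt = Matrix.diagonal (fun i => -(2 / (∑ j, A i j ^ 2))) * A := by
    ext i j
    simp [hWt, ww, Matrix.diagonal_mul]
  have hdetW : Wt.det = (∏ i, -(2 / (∑ j, A i j ^ 2))) * A.det := by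
    rw [hW, Matrix.det_mul, Matrix.det_diagonal]
  -- det Vt
  set N : Matrix (Fin n) (Fin n) ℝ :=
    Matrix.of (fun j i => if j < i then ww A j ⬝ᵥ A i else 0) with hN
  have hVrel : A = (1 - Nᵀ) * Vt := by
    ext i s
    have := vv_eq A i
    have h2 : vv A i s = A i s + ∑ j, (if j < i then ww A j ⬝ᵥ A i else 0) * vv A j s := by
      rw [this]
      simp [Finset.sum_apply, Pi.smul_apply, ite_apply, smul_eq_mul, Pi.add_apply]
    rw [Matrix.sub_mul, Matrix.one_mul, Matrix.sub_apply, Matrix.mul_apply]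
    simp only [hVt, hN, Matrix.transpose_apply, Matrix.of_apply]
    rw [h2]
    ring_nf
  have hTri : (1 - Nᵀ).BlockTriangular OrderDual.toDual := by
    intro i j hij
    simp only [Matrix.sub_apply, Matrix.one_apply, Matrix.transpose_apply, hN, Matrix.of_apply]
    have hij' : i < j := hij
    rw [if_neg hij'.ne, if_neg (asymm hij'), sub_zero]
  have hdet1 : (1 - Nᵀ).det = 1 := by
    rw [Matrix.det_of_lowerTriangular _ hTri]
    refine Finset.prod_eq_one fun i _ => ?_
    simp [hN, Matrix.one_apply]
  have hdetV : Vt.det = A.det := by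
    rw [hVrel, Matrix.det_mul, hdet1, one_mul]
  -- combine
  rw [hfact, Matrix.det_mul, Matrix.det_transpose, hdetW, hdetV]
  have hprod : (∏ i : Fin n, -(2 / (∑ j, A i j ^ 2)))
      = (-2 : ℝ) ^ n * ∏ i, (∑ j, A i j ^ 2)⁻¹ := by
    have h1 : (∏ i : Fin n, -(2 / (∑ j, A i j ^ 2)))
        = ∏ i : Fin n, (-2 : ℝ) * (∑ j, A i j ^ 2)⁻¹ :=
      Finset.prod_congr rfl fun i _ => by rw [div_eq_mul_inv]; ring
    rw [h1, Finset.prod_mul_distrib, Finset.prod_const, Finset.card_univ, Fintype.card_fin]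
  rw [hprod]
  ring
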